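/- Let n, m, k ≥ 1 and d_0, d_1, …, d_{2k} be positive integers with d_0 = n, d_{2k} = m ≥ 2n+1, and d_j ≥ 2n+1 for every even index j ≥ 2. For j = 1,…,k let f_j : ℝ^{d_{2j−2}} → ℝ^{d_{2j−1}} be injective and locally Lipschitz maps (in particular, injective ReLU neural networks are such maps). Let (B_1,…,B_k) be random matrices B_j ∈ ℝ^{d_{2j}×d_{2j−1}} whose joint distribution is absolutely continuous with respect to the Lebesgue measure on ∏_{j=1}^k ℝ^{d_{2j}×d_{2j−1}}. Then the composed map F_k = B_k ∘ f_k ∘ B_{k−1} ∘ f_{k−1} ∘ ⋯ ∘ B_1 ∘ f_1 : ℝ^n → ℝ^m is injective almost surely. -/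

import Mathlib

/-!
Let `j` be the first layer after which injectivity fails: `F_j x ≠ F_j y` but
`F_{j+1} x = F_{j+1} y`. As `f_j` is injective, `w = f_j(F_j x) - f_j(F_j y)` is a nonzero vector
killed by `B_j`, and `w` is a locally Lipschitz function of `(x, y)` and `B_0, …, B_{j-1}` only.
A matrix killing a `w` with `w_l ≠ 0` is recovered smoothly from `w` and its other columns. So the
bad weights lie in a locally Lipschitz image of a space of dimension
`2n + dim(weights) - d_{2j+2} < dim(weights)`, whose Hausdorff dimension is too small to carry
Lebesgue measure.
-/

open MeasureTheory ProbabilityTheory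

/-- The composed map `F_k = B_{k-1} ∘ f_{k-1} ∘ ⋯ ∘ B_0 ∘ f_0` (0-indexed): each
`f_j : ℝ^{d(2j)} → ℝ^{d(2j+1)}` is followed by the matrix `B_j ∈ ℝ^{d(2j+2)×d(2j+1)}`. -/
noncomputable def comp (d : ℕ → ℕ)
    (f : ∀ j : ℕ, (Fin (d (2 * j)) → ℝ) → (Fin (d (2 * j + 1)) → ℝ))
    (B : ∀ j : ℕ, Fin (d (2 * j + 2)) → Fin (d (2 * j + 1)) → ℝ) :
    (k : ℕ) → (Fin (d 0) → ℝ) → (Fin (d (2 * k)) → ℝ)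
  | 0, x => x
  | (k + 1), x => (Matrix.of (B k)).mulVec (f k (comp d f B k x))

open Module Set
open scoped Matrix

theorem Nat.exists_lt_and_not_succ {P : ℕ → Prop} (h0 : P 0) {k : ℕ} (hk : ¬ P k) :
    ∃ j < k, P j ∧ ¬ P (j + 1) := by
  induction k with
  | zero => exact absurd h0 hk
  | succ k ih =>
    by_cases hPk : P k
    · exact ⟨k, k.lt_succ_self, hPk, hk⟩
    · obtain ⟨j, hj, hPj⟩ := ih hPk
      exact ⟨j, hj.trans k.lt_succ_self, hPj⟩

section HausdorffDimension

variable {E : Type*} [NormedAddCommGroup E] [NormedSpace ℝ E] [FiniteDimensional ℝ E]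

theorem Submodule.dimH_coe (S : Submodule ℝ E) : dimH (S : Set E) = finrank ℝ S := by
  have h := (isometry_subtype_coe (s := (S : Set E))).dimH_image univ
  rw [image_univ, Subtype.range_coe] at h
  exact h.trans (Real.dimH_univ_eq_finrank S)

theorem MeasureTheory.Measure.addHaar_eq_zero_of_dimH_lt [MeasurableSpace E] [BorelSpace E]
    (μ : Measure E) [μ.IsAddHaarMeasure] {s : Set E} (hs : dimH s < finrank ℝ E) : μ s = 0 := by
  have hμ : μ ≪ μH[((finrank ℝ E : NNReal) : ℝ)] := by
    rw [NNReal.coe_natCast]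
    exact absolutelyContinuous_isAddHaarMeasure μ _
  exact measure_zero_of_dimH_lt hμ (by exact_mod_cast hs)

theorem dimH_image_comp_le_of_contDiffAt {X Y Z : Type*} [MetricSpace X]
    [SecondCountableTopology X] [NormedAddCommGroup Y] [NormedSpace ℝ Y]
    [NormedAddCommGroup Z] [NormedSpace ℝ Z] {H : X → Y} (hH : LocallyLipschitz H) {G : Y → Z}
    {s : Set X} (hG : ∀ x ∈ s, ContDiffAt ℝ 1 G (H x)) : dimH ((G ∘ H) '' s) ≤ dimH s := by
  refine dimH_image_le_of_locally_lipschitzOn fun x hx => ?_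
  obtain ⟨KG, t, ht, hGt⟩ := (hG x hx).exists_lipschitzOnWith
  obtain ⟨KH, u, hu, hHu⟩ := hH x
  refine ⟨KG * KH, u ∩ H ⁻¹' t, mem_nhdsWithin_of_mem_nhds ?_, ?_⟩
  · exact Filter.inter_mem hu (hH.continuous.continuousAt.preimage_mem_nhds ht)
  · exact hGt.comp (hHu.mono inter_subset_left) fun y hy => hy.2

end HausdorffDimension

-- Solves the constraint `∑ m, γ i m * v m = 0` of each row `i` for its entry `γ i l`.
noncomputable def fillColumn {a b : ℕ} (l : Fin a) (q : (Fin a → ℝ) × (Fin b → Fin a → ℝ)) :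
    Fin b → Fin a → ℝ :=
  fun i m => if m = l then -(∑ k, q.2 i k * q.1 k) / q.1 l else q.2 i m

theorem contDiffAt_fillColumn {a b : ℕ} (l : Fin a) {q : (Fin a → ℝ) × (Fin b → Fin a → ℝ)}
    (hq : q.1 l ≠ 0) : ContDiffAt ℝ 1 (fillColumn l) q := by
  refine contDiffAt_pi.2 fun i => contDiffAt_pi.2 fun m => ?_
  unfold fillColumn
  split_ifs
  · fun_prop (disch := assumption)
  · fun_prop

theorem fillColumn_update_zero {a b : ℕ} {l : Fin a} {v : Fin a → ℝ} (hv : v l ≠ 0)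
    {β : Fin b → Fin a → ℝ} (hβ : Matrix.of β *ᵥ v = 0) :
    fillColumn l (v, fun i => Function.update (β i) l 0) = β := by
  ext i m
  have hrow : ∑ k, β i k * v k = 0 := congrFun hβ i
  rcases eq_or_ne m l with rfl | hm
  · have : ∑ k, Function.update (β i) m 0 k * v k = ∑ k, β i k * v k - β i m * v m := by
      simp [Function.update_apply, Finset.sum_ite, Finset.filter_ne']
    simp only [fillColumn, if_true, this, hrow, zero_sub, neg_neg, mul_div_cancel_right₀ _ hv]
  · simp [fillColumn, hm]

section MatrixKernel

variable {E P : Type*} [NormedAddCommGroup E] [NormedSpace ℝ E] [FiniteDimensional ℝ E]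
  [NormedAddCommGroup P] [NormedSpace ℝ P] [FiniteDimensional ℝ P] {a b : ℕ}
  (π : P →L[ℝ] (Fin b → Fin a → ℝ)) (σ : (Fin b → Fin a → ℝ) →L[ℝ] P)

def columnMap (l : Fin a) : E × P →ₗ[ℝ] (Fin b → ℝ) where
  toFun x i := π x.2 i l
  map_add' x y := by ext i; simp
  map_smul' c x := by ext i; simp

theorem finrank_ker_columnMap_lt (hπσ : ∀ β, π (σ β) = β) (l : Fin a) (hdim : finrank ℝ E < b) :
    finrank ℝ (LinearMap.ker (columnMap (E := E) π l)) < finrank ℝ P := by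
  have hsurj : LinearMap.range (columnMap (E := E) π l) = ⊤ := by
    refine LinearMap.range_eq_top.2 fun u => ⟨(0, σ fun i m => if m = l then u i else 0), ?_⟩
    ext i
    simp [columnMap, hπσ]
  have h := LinearMap.finrank_range_add_finrank_ker (columnMap (E := E) π l)
  rw [hsurj, finrank_top, finrank_prod, finrank_fin_fun] at h
  omega

theorem addHaar_setOf_exists_mulVec_eq_zero [MeasurableSpace P] [BorelSpace P] (μ : Measure P)
    [μ.IsAddHaarMeasure] (hπσ : ∀ β, π (σ β) = β) (w : E × P → Fin a → ℝ)
    (hw : LocallyLipschitz w) (hwσ : ∀ e p β, w (e, p + σ β) = w (e, p))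
    (hdim : finrank ℝ E < b) :
    μ {p | ∃ e, w (e, p) ≠ 0 ∧ Matrix.of (π p) *ᵥ w (e, p) = 0} = 0 := by
  set Φ : Fin a → (Fin a → ℝ) × P → P := fun l q => q.2 + σ (fillColumn l (q.1, π q.2) - π q.2)
  set D : Fin a → Set (E × P) := fun l =>
    {x | w x l ≠ 0} ∩ (LinearMap.ker (columnMap (E := E) π l) : Set (E × P))
  have hcover : {p | ∃ e, w (e, p) ≠ 0 ∧ Matrix.of (π p) *ᵥ w (e, p) = 0} ⊆
      ⋃ l, (Φ l ∘ fun x => (w x, x.2)) '' D l := by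
    rintro p ⟨e, hne, hker⟩
    obtain ⟨l, hl⟩ := Function.ne_iff.1 hne
    set γ : Fin b → Fin a → ℝ := fun i => Function.update (π p i) l 0
    set p' := p + σ (γ - π p)
    have hwp' : w (e, p') = w (e, p) := hwσ _ _ _
    have hπp' : π p' = γ := by simp [p', hπσ]
    refine mem_iUnion.2 ⟨l, (e, p'), ⟨by simpa [hwp'] using hl, ?_⟩, ?_⟩
    · ext i
      simp [columnMap, hπp', γ]
    · change p' + σ (fillColumn l (w (e, p'), π p') - π p') = p
      rw [hwp', hπp', fillColumn_update_zero hl hker, add_assoc, ← map_add, sub_add_sub_cancel,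
        sub_self, map_zero, add_zero]
  refine measure_mono_null hcover (measure_iUnion_null fun l => μ.addHaar_eq_zero_of_dimH_lt ?_)
  have hΦ : ∀ x ∈ D l, ContDiffAt ℝ 1 (Φ l) (w x, x.2) := fun x hx => by
    have hpair : ContDiffAt ℝ 1 (fun q : (Fin a → ℝ) × P => (q.1, π q.2)) (w x, x.2) := by
      fun_prop
    have hfill := (contDiffAt_fillColumn l (q := (w x, π x.2)) hx.1).comp (w x, x.2) hpair
    fun_prop
  calc dimH ((Φ l ∘ fun x => (w x, x.2)) '' D l)
      ≤ dimH (D l) :=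
        dimH_image_comp_le_of_contDiffAt (hw.prodMk LipschitzWith.prod_snd.locallyLipschitz) hΦ
    _ ≤ dimH (LinearMap.ker (columnMap (E := E) π l) : Set (E × P)) := dimH_mono inter_subset_right
    _ = finrank ℝ (LinearMap.ker (columnMap (E := E) π l)) := Submodule.dimH_coe _
    _ < finrank ℝ P := by exact_mod_cast finrank_ker_columnMap_lt π σ hπσ l hdim

end MatrixKernel

section Network

variable {d : ℕ → ℕ} {k : ℕ}

abbrev LayerWeight (d : ℕ → ℕ) (j : ℕ) : Type := Fin (d (2 * j + 2)) → Fin (d (2 * j + 1)) → ℝ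

abbrev Weights (d : ℕ → ℕ) (k : ℕ) : Type := ∀ j : Fin k, LayerWeight d j

-- `comp` reads weights indexed by `ℕ`; those of index `≥ k` never enter `comp _ _ _ k`.
noncomputable def Weights.extend (p : Weights d k) (j : ℕ) : LayerWeight d j :=
  if h : j < k then p ⟨j, h⟩ else 0

variable (f : ∀ j : ℕ, (Fin (d (2 * j)) → ℝ) → (Fin (d (2 * j + 1)) → ℝ))

theorem comp_congr {B B' : ∀ j : ℕ, LayerWeight d j} (h : ∀ j < k, B j = B' j) :
    comp d f B k = comp d f B' k := by
  induction k with
  | zero => rfl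
  | succ k ih =>
    funext x
    simp only [comp, h k k.lt_succ_self, ih fun j hj => h j (hj.trans k.lt_succ_self)]

theorem contDiff_matrixOf_mulVec (a b : ℕ) :
    ContDiff ℝ 1 fun q : (Fin b → Fin a → ℝ) × (Fin a → ℝ) => Matrix.of q.1 *ᵥ q.2 := by
  refine contDiff_pi.2 fun i => ?_
  simp only [Matrix.mulVec, dotProduct, Matrix.of_apply]
  fun_prop

theorem contDiff_extend_mulVec (j : ℕ) :
    ContDiff ℝ 1 fun q : Weights d k × (Fin (d (2 * j + 1)) → ℝ) =>
      Matrix.of (q.1.extend j) *ᵥ q.2 := by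
  unfold Weights.extend
  by_cases h : j < k
  · simp only [dif_pos h]
    have hproj := (ContinuousLinearMap.proj (R := ℝ) (φ := fun i : Fin k => LayerWeight d i)
      ⟨j, h⟩).contDiff (n := 1)
    exact (contDiff_matrixOf_mulVec _ _).comp ((hproj.comp contDiff_fst).prodMk contDiff_snd)
  · simp only [dif_neg h, Matrix.of_zero, Matrix.zero_mulVec]
    exact contDiff_const

theorem locallyLipschitz_comp_extend (hf : ∀ j, LocallyLipschitz (f j)) (j : ℕ) :
    LocallyLipschitz fun q : Weights d k × (Fin (d 0) → ℝ) => comp d f q.1.extend j q.2 := by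
  induction j with
  | zero => exact LipschitzWith.prod_snd.locallyLipschitz
  | succ j ih =>
    have hstep := (contDiff_extend_mulVec (d := d) (k := k) j).locallyLipschitz
    have hinner : LocallyLipschitz fun q : Weights d k × (Fin (d 0) → ℝ) =>
        (q.1, f j (comp d f q.1.extend j q.2)) :=
      LipschitzWith.prod_fst.locallyLipschitz.prodMk ((hf j).comp ih)
    have heq : (fun q : Weights d k × (Fin (d 0) → ℝ) => comp d f q.1.extend (j + 1) q.2) =
        (fun q : Weights d k × (Fin (d (2 * j + 1)) → ℝ) => Matrix.of (q.1.extend j) *ᵥ q.2) ∘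
          fun q => (q.1, f j (comp d f q.1.extend j q.2)) := by
      funext q
      simp only [comp, Function.comp_apply]
    rw [heq]
    exact hstep.comp hinner

noncomputable def layerGap (j : ℕ) (q : ((Fin (d 0) → ℝ) × (Fin (d 0) → ℝ)) × Weights d k) :
    Fin (d (2 * j + 1)) → ℝ :=
  f j (comp d f q.2.extend j q.1.1) - f j (comp d f q.2.extend j q.1.2)

theorem locallyLipschitz_layerGap (hf : ∀ j, LocallyLipschitz (f j)) (j : ℕ) :
    LocallyLipschitz (layerGap (k := k) f j) := by
  have hcomp := locallyLipschitz_comp_extend (k := k) f hf j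
  have hx : LocallyLipschitz fun q : ((Fin (d 0) → ℝ) × (Fin (d 0) → ℝ)) × Weights d k =>
      (q.2, q.1.1) :=
    (LipschitzWith.prod_snd.prodMk
      (LipschitzWith.prod_fst.comp LipschitzWith.prod_fst)).locallyLipschitz
  have hy : LocallyLipschitz fun q : ((Fin (d 0) → ℝ) × (Fin (d 0) → ℝ)) × Weights d k =>
      (q.2, q.1.2) :=
    (LipschitzWith.prod_snd.prodMk
      (LipschitzWith.prod_snd.comp LipschitzWith.prod_fst)).locallyLipschitz
  have h := ((hf j).comp (hcomp.comp hx)).sub ((hf j).comp (hcomp.comp hy))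
  simp only [Function.comp_def] at h
  exact h

theorem layerGap_add_single (j : Fin k) (e : (Fin (d 0) → ℝ) × (Fin (d 0) → ℝ)) (p : Weights d k)
    (β : LayerWeight d j) :
    layerGap f j (e, p + Pi.single j β) = layerGap f j (e, p) := by
  have h : ∀ i < (j : ℕ), (p + Pi.single j β).extend i = p.extend i := fun i hi => by
    have hik : i < k := hi.trans j.2
    have hij : (⟨i, hik⟩ : Fin k) ≠ j := Fin.ne_of_lt hi
    simp [Weights.extend, hik, Pi.single_eq_of_ne hij]
  simp only [layerGap, comp_congr f h]

theorem setOf_not_injective_comp_subset (hfinj : ∀ j, Function.Injective (f j)) :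
    {p : Weights d k | ¬ Function.Injective (comp d f p.extend k)} ⊆
      ⋃ j : Fin k, {p | ∃ e, layerGap f j (e, p) ≠ 0 ∧
        Matrix.of (p j) *ᵥ layerGap f j (e, p) = 0} := by
  intro p hp
  obtain ⟨j, hjk, hinj, hnot⟩ := Nat.exists_lt_and_not_succ
    (P := fun j => Function.Injective (comp d f p.extend j)) (fun _ _ h => h) hp
  obtain ⟨x, y, hxy, hne⟩ := Function.not_injective_iff.1 hnot
  refine mem_iUnion.2 ⟨⟨j, hjk⟩, (x, y), sub_ne_zero.2 fun h => hne (hinj (hfinj j h)), ?_⟩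
  have hext : p.extend j = p ⟨j, hjk⟩ := dif_pos hjk
  rw [layerGap, Matrix.mulVec_sub, sub_eq_zero]
  simpa only [comp, hext] using hxy

theorem volume_setOf_not_injective_comp (hfinj : ∀ j, Function.Injective (f j))
    (hf : ∀ j, LocallyLipschitz (f j)) (hdim : ∀ j < k, 2 * d 0 < d (2 * j + 2)) :
    volume {p : Weights d k | ¬ Function.Injective (comp d f p.extend k)} = 0 := by
  have : ∀ j : Fin k, (volume : Measure (LayerWeight d j)).IsAddHaarMeasure :=
    fun _ => Measure.pi.isAddHaarMeasure _
  have : (volume : Measure (Weights d k)).IsAddHaarMeasure := Measure.pi.isAddHaarMeasure _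
  refine measure_mono_null (setOf_not_injective_comp_subset f hfinj)
    (measure_iUnion_null fun j => ?_)
  exact addHaar_setOf_exists_mulVec_eq_zero (ContinuousLinearMap.proj j)
    (ContinuousLinearMap.single ℝ (fun i : Fin k => LayerWeight d i) j) volume (fun β => by simp)
    (layerGap f j) (locallyLipschitz_layerGap f hf j) (layerGap_add_single f j)
    (by rw [finrank_prod, finrank_fin_fun, ← two_mul]; exact hdim j j.2)

end Network

theorem cascaded_network_injective_almost_surely_general
    (n k : ℕ)
    (d : ℕ → ℕ)
    (hd0 : d 0 = n)
    (hdeven : ∀ j : ℕ, 1 ≤ j → j ≤ k → 2 * n + 1 ≤ d (2 * j))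
    (f : ∀ j : ℕ, (Fin (d (2 * j)) → ℝ) → (Fin (d (2 * j + 1)) → ℝ))
    (hfinj : ∀ j, Function.Injective (f j))
    (hflip : ∀ j, LocallyLipschitz (f j))
    {Ω : Type*} [MeasureSpace Ω]
    (B : Ω → ∀ j : ℕ, Fin (d (2 * j + 2)) → Fin (d (2 * j + 1)) → ℝ)
    (hBmeas : Measurable fun ω => fun j : Fin k => B ω j)
    (hBac : (Measure.map (fun ω => fun j : Fin k => B ω j) ℙ) ≪
      (volume :
        Measure (∀ j : Fin k, Fin (d (2 * (j : ℕ) + 2)) → Fin (d (2 * (j : ℕ) + 1)) → ℝ))) :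
    ∀ᵐ ω ∂(ℙ : Measure Ω), Function.Injective (fun x : Fin (d 0) → ℝ => comp d f (B ω) k x) := by
  have hdim : ∀ j < k, 2 * d 0 < d (2 * j + 2) := fun j hj => by
    have h := hdeven (j + 1) (Nat.le_add_left 1 j) hj
    rw [mul_add, mul_one] at h
    omega
  have hnull := volume_setOf_not_injective_comp f hfinj hflip hdim
  have hbad : ℙ ((fun ω => fun j : Fin k => B ω j) ⁻¹'
      {p : Weights d k | ¬ Function.Injective (comp d f p.extend k)}) = 0 :=
    le_antisymm ((Measure.le_map_apply hBmeas.aemeasurable _).trans_eq (hBac hnull)) bot_le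
  refine ae_iff.2 (measure_mono_null (fun ω hω => ?_) hbad)
  have hB : comp d f (Weights.extend fun j : Fin k => B ω j) k = comp d f (B ω) k :=
    comp_congr f fun j hj => dif_pos hj
  show ¬ Function.Injective (comp d f (Weights.extend fun j : Fin k => B ω j) k)
  rw [hB]
  exact hω

/-- **Injectivity of cascaded networks with random projections**: if each `f_j` is injective
and locally Lipschitz (in particular an injective ReLU network), the dimensions satisfy
`d(2j) ≥ 2n+1` for `1 ≤ j ≤ k` (with `d 0 = n`, `d(2k) = m ≥ 2n+1`), and the random
matrices `(B_0, …, B_{k-1})` have a joint distribution absolutely continuous with respect to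
the Lebesgue measure on `∏_j ℝ^{d(2j+2)×d(2j+1)}`, then the composed map
`F_k : ℝ^n → ℝ^m` is injective almost surely. -/
theorem cascaded_network_injective_almost_surely
    (n m k : ℕ) (hn : 1 ≤ n) (hm : 1 ≤ m) (hk : 1 ≤ k)
    (d : ℕ → ℕ) (hpos : ∀ j, 1 ≤ j → j ≤ 2 * k → 1 ≤ d j)
    (hd0 : d 0 = n) (hdk : d (2 * k) = m) (hm2n : 2 * n + 1 ≤ m)
    (hdeven : ∀ j : ℕ, 1 ≤ j → j ≤ k → 2 * n + 1 ≤ d (2 * j))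
    (f : ∀ j : ℕ, (Fin (d (2 * j)) → ℝ) → (Fin (d (2 * j + 1)) → ℝ))
    (hfinj : ∀ j, Function.Injective (f j))
    (hflip : ∀ j, LocallyLipschitz (f j))
    {Ω : Type*} [MeasureSpace Ω] [IsProbabilityMeasure (ℙ : Measure Ω)]
    (B : Ω → ∀ j : ℕ, Fin (d (2 * j + 2)) → Fin (d (2 * j + 1)) → ℝ)
    (hBmeas : Measurable fun ω => fun j : Fin k => B ω j)
    (hBac : (Measure.map (fun ω => fun j : Fin k => B ω j) ℙ) ≪
      (volume :
        Measure (∀ j : Fin k, Fin (d (2 * (j : ℕ) + 2)) → Fin (d (2 * (j : ℕ) + 1)) → ℝ))) :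
    ∀ᵐ ω ∂(ℙ : Measure Ω), Function.Injective (fun x : Fin (d 0) → ℝ => comp d f (B ω) k x) :=
  cascaded_network_injective_almost_surely_general n k d hd0 hdeven f hfinj hflip B hBmeas hBac
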